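/- In GF(2^4) with ζ^4 = ζ + 1, for the (6,4) RS code with second parity coefficients (P_1, P_2, P_3, P_4) = (ζ^3+ζ^2+ζ+1, ζ+1, 1, ζ^2): the repair field elements f_1 = 1, f_2 = ζ^2 (for parity with all-ones coefficients) and g_1 = ζ^{-2}, g_2 = 1 (for the second parity) satisfy rank_2(f_1, f_2, g_1·P_1, g_2·P_1) = 4, while rank_2(f_1, f_2, g_1·P_u, g_2·P_u) ≤ 3 for each u ∈ {2,3,4}. -/
import Mathlib

set_option maxHeartbeats 4000000 in
/-- In `GF(2^4)` with `ζ⁴ = ζ + 1`, for the `(6,4)` RS code with second parity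
coefficients `(P₁, P₂, P₃, P₄) = (ζ³+ζ²+ζ+1, ζ+1, 1, ζ²)` (the first parity having all
coefficients `1`):  the repair field elements `f₁ = 1`, `f₂ = ζ²`, `g₁ = ζ⁻²`, `g₂ = 1`
satisfy `rank₂(f₁, f₂, g₁·P₁, g₂·P₁) = 4`, while `rank₂(f₁, f₂, g₁·P_u, g₂·P_u) ≤ 3` for
each `u ∈ {2,3,4}`, where `rank₂` is the dimension of the `GF(2)`-linear span. -/
theorem stmt17 (ζ : GaloisField 2 4) (hζ : ζ ^ 4 = ζ + 1) :
    Module.finrank (ZMod 2) (Submodule.span (ZMod 2) (Set.range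
      ![(1 : GaloisField 2 4), ζ ^ 2,
        (ζ ^ 2)⁻¹ * (ζ ^ 3 + ζ ^ 2 + ζ + 1), 1 * (ζ ^ 3 + ζ ^ 2 + ζ + 1)])) = 4 ∧
    Module.finrank (ZMod 2) (Submodule.span (ZMod 2) (Set.range
      ![(1 : GaloisField 2 4), ζ ^ 2,
        (ζ ^ 2)⁻¹ * (ζ + 1), 1 * (ζ + 1)])) ≤ 3 ∧
    Module.finrank (ZMod 2) (Submodule.span (ZMod 2) (Set.range
      ![(1 : GaloisField 2 4), ζ ^ 2,
        (ζ ^ 2)⁻¹ * 1, 1 * 1])) ≤ 3 ∧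
    Module.finrank (ZMod 2) (Submodule.span (ZMod 2) (Set.range
      ![(1 : GaloisField 2 4), ζ ^ 2,
        (ζ ^ 2)⁻¹ * ζ ^ 2, 1 * ζ ^ 2])) ≤ 3 := by
  have htwo : (2 : GaloisField 2 4) = 0 := by
    have := CharP.cast_eq_zero (GaloisField 2 4) 2
    exact_mod_cast this
  have hm : ζ ^ 4 + ζ + 1 = 0 := by linear_combination hζ + (ζ + 1) * htwo
  have hmul : ζ ^ 2 * (ζ ^ 3 + ζ ^ 2 + 1) = 1 := by
    linear_combination (ζ + 1) * hm - (ζ + 1) * htwo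
  have hinv : (ζ ^ 2)⁻¹ = ζ ^ 3 + ζ ^ 2 + 1 := inv_eq_of_mul_eq_one_right hmul
  have hFD : Module.Finite (ZMod 2) (GaloisField 2 4) := Module.Finite.of_finite
  -- linear independence of 1, ζ, ζ², ζ³
  have hind : LinearIndependent (ZMod 2) ![(1 : GaloisField 2 4), ζ, ζ ^ 2, ζ ^ 3] := by
    rw [Fintype.linearIndependent_iff]
    intro g hg i
    simp only [Fin.sum_univ_four, Matrix.cons_val_zero, Matrix.cons_val_one, Matrix.head_cons,
      Matrix.cons_val_two, Matrix.tail_cons, Matrix.cons_val_three] at hg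
    have hcase : ∀ c : ZMod 2, c = 0 ∨ c = 1 := by decide
    rcases hcase (g 0) with h0 | h0 <;> rcases hcase (g 1) with h1 | h1 <;>
      rcases hcase (g 2) with h2 | h2 <;> rcases hcase (g 3) with h3 | h3 <;>
      rw [h0, h1, h2, h3] at hg <;>
      simp only [zero_smul, one_smul, add_zero, zero_add] at hg
    · fin_cases i <;> assumption
    · exact absurd (by linear_combination ((1:GaloisField 2 4) + ζ + ζ^2 + ζ^3) * hg + ((1:GaloisField 2 4) + ζ + ζ^2) * hm + (-1*ζ + -1*ζ^2 + -1*ζ^3 + -1*ζ^4 + -1*ζ^5 + -1*ζ^6) * htwo : (1:GaloisField 2 4) = 0) one_ne_zero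
    · exact absurd (by linear_combination ((1:GaloisField 2 4) + ζ^2 + ζ^3) * hg + ((1:GaloisField 2 4) + ζ) * hm + (-1*ζ + -1*ζ^2 + -1*ζ^4 + -1*ζ^5) * htwo : (1:GaloisField 2 4) = 0) one_ne_zero
    · exact absurd (by linear_combination (ζ + ζ^3) * hg + ((1:GaloisField 2 4) + ζ + ζ^2) * hm + (-1*ζ + -1*ζ^2 + -1*ζ^3 + -1*ζ^4 + -1*ζ^5 + -1*ζ^6) * htwo : (1:GaloisField 2 4) = 0) one_ne_zero
    · exact absurd (by linear_combination ((1:GaloisField 2 4) + ζ^3) * hg + ((1:GaloisField 2 4)) * hm + (-1*ζ + -1*ζ^4) * htwo : (1:GaloisField 2 4) = 0) one_ne_zero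
    · exact absurd (by linear_combination (ζ^2 + ζ^3) * hg + ((1:GaloisField 2 4) + ζ + ζ^2) * hm + (-1*ζ + -1*ζ^2 + -1*ζ^3 + -1*ζ^4 + -1*ζ^5 + -1*ζ^6) * htwo : (1:GaloisField 2 4) = 0) one_ne_zero
    · exact absurd (by linear_combination ((1:GaloisField 2 4) + ζ + ζ^2) * hg + ((1:GaloisField 2 4)) * hm + (-1*ζ + -1*ζ^2 + -1*ζ^3 + -1*ζ^4) * htwo : (1:GaloisField 2 4) = 0) one_ne_zero
    · exact absurd (by linear_combination ((1:GaloisField 2 4) + ζ) * hg + ((1:GaloisField 2 4)) * hm + (-1*ζ + -1*ζ^2 + -1*ζ^3 + -1*ζ^4) * htwo : (1:GaloisField 2 4) = 0) one_ne_zero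
    · exact absurd (by linear_combination ((1:GaloisField 2 4)) * hg + ((0:GaloisField 2 4)) * hm + ((0:GaloisField 2 4)) * htwo : (1:GaloisField 2 4) = 0) one_ne_zero
    · exact absurd (by linear_combination (ζ) * hg + ((1:GaloisField 2 4)) * hm + (-1*ζ + -1*ζ^4) * htwo : (1:GaloisField 2 4) = 0) one_ne_zero
    · exact absurd (by linear_combination ((1:GaloisField 2 4) + ζ + ζ^3) * hg + (ζ) * hm + (-1*ζ + -1*ζ^2 + -1*ζ^3 + -1*ζ^5) * htwo : (1:GaloisField 2 4) = 0) one_ne_zero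
    · exact absurd (by linear_combination (ζ^2) * hg + ((1:GaloisField 2 4) + ζ) * hm + (-1*ζ + -1*ζ^2 + -1*ζ^4 + -1*ζ^5) * htwo : (1:GaloisField 2 4) = 0) one_ne_zero
    · exact absurd (by linear_combination (ζ + ζ^2 + ζ^3) * hg + ((1:GaloisField 2 4)) * hm + (-1*ζ + -1*ζ^2 + -1*ζ^3 + -1*ζ^4) * htwo : (1:GaloisField 2 4) = 0) one_ne_zero
    · exact absurd (by linear_combination ((1:GaloisField 2 4) + ζ^2) * hg + (ζ) * hm + (-1*ζ + -1*ζ^2 + -1*ζ^3 + -1*ζ^5) * htwo : (1:GaloisField 2 4) = 0) one_ne_zero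
    · exact absurd (by linear_combination (ζ + ζ^2) * hg + ((1:GaloisField 2 4)) * hm + (-1*ζ + -1*ζ^2 + -1*ζ^3 + -1*ζ^4) * htwo : (1:GaloisField 2 4) = 0) one_ne_zero
    · exact absurd (by linear_combination (ζ^3) * hg + ((1:GaloisField 2 4) + ζ + ζ^2) * hm + (-1*ζ + -1*ζ^2 + -1*ζ^3 + -1*ζ^4 + -1*ζ^5 + -1*ζ^6) * htwo : (1:GaloisField 2 4) = 0) one_ne_zero
  have hfr : Module.finrank (ZMod 2) (GaloisField 2 4) = 4 := GaloisField.finrank 2 (by norm_num)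
  have hbtop : Submodule.span (ZMod 2) (Set.range ![(1 : GaloisField 2 4), ζ, ζ ^ 2, ζ ^ 3]) = ⊤ :=
    hind.span_eq_top_of_card_eq_finrank (by simp [hfr])
  refine ⟨?_, ?_, ?_, ?_⟩
  · -- rank 4 case
    set S := Submodule.span (ZMod 2) (Set.range
      ![(1 : GaloisField 2 4), ζ ^ 2,
        (ζ ^ 2)⁻¹ * (ζ ^ 3 + ζ ^ 2 + ζ + 1), 1 * (ζ ^ 3 + ζ ^ 2 + ζ + 1)]) with hS
    have m1 : (1 : GaloisField 2 4) ∈ S := Submodule.subset_span ⟨0, rfl⟩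
    have m2 : ζ ^ 2 ∈ S := Submodule.subset_span ⟨1, rfl⟩
    have e3 : (ζ ^ 2)⁻¹ * (ζ ^ 3 + ζ ^ 2 + ζ + 1) = ζ ^ 2 + ζ + 1 := by
      rw [hinv]; linear_combination (ζ^2) * hm + (ζ^5 + ζ^4 + ζ^3) * htwo
    have m3 : ζ ^ 2 + ζ + 1 ∈ S := e3 ▸ Submodule.subset_span ⟨2, rfl⟩
    have m4 : ζ ^ 3 + ζ ^ 2 + ζ + 1 ∈ S := (one_mul (ζ ^ 3 + ζ ^ 2 + ζ + 1)) ▸ Submodule.subset_span ⟨3, rfl⟩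
    have mz : ζ ∈ S := by
      have h := S.add_mem (S.add_mem m1 m2) m3
      have : (1 : GaloisField 2 4) + ζ ^ 2 + (ζ ^ 2 + ζ + 1) = ζ := by
        linear_combination (ζ^2 + 1) * htwo
      rwa [this] at h
    have mz3 : ζ ^ 3 ∈ S := by
      have h := S.add_mem m3 m4
      have : ζ ^ 2 + ζ + 1 + (ζ ^ 3 + ζ ^ 2 + ζ + 1) = ζ ^ 3 := by
        linear_combination (ζ^2 + ζ + 1) * htwo
      rwa [this] at h
    have hStop : S = ⊤ := by
      refine le_antisymm le_top ?_
      rw [← hbtop]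
      refine Submodule.span_le.2 ?_
      rintro x ⟨i, rfl⟩
      fin_cases i
      · exact m1
      · exact mz
      · exact m2
      · exact mz3
    rw [hStop, finrank_top]
    exact hfr
  · haveI := hFD
    set T := Submodule.span (ZMod 2) (Set.range ![(1 : GaloisField 2 4), ζ ^ 2, ζ + 1]) with hT
    have t1 : (1 : GaloisField 2 4) ∈ T := Submodule.subset_span ⟨0, rfl⟩
    have t2 : ζ ^ 2 ∈ T := Submodule.subset_span ⟨1, rfl⟩
    have t3 : ζ + 1 ∈ T := Submodule.subset_span ⟨2, rfl⟩
    have key : Submodule.span (ZMod 2) (Set.range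
        ![(1 : GaloisField 2 4), ζ ^ 2, (ζ ^ 2)⁻¹ * (ζ + 1), 1 * (ζ + 1)]) ≤ T := by
      refine Submodule.span_le.2 ?_
      rintro x ⟨i, rfl⟩
      fin_cases i
      · exact t1
      · exact t2
      · show (ζ ^ 2)⁻¹ * (ζ + 1) ∈ T
        have e : (ζ ^ 2)⁻¹ * (ζ + 1) = ζ ^ 2 := by
          rw [hinv]; linear_combination hm + ζ^3 * htwo
        rw [e]; exact t2
      · show 1 * (ζ + 1) ∈ T
        rw [one_mul]; exact t3
    refine le_trans (Submodule.finrank_mono key) ?_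
    have h := finrank_range_le_card (R := ZMod 2) ![(1 : GaloisField 2 4), ζ ^ 2, ζ + 1]
    rw [Fintype.card_fin] at h
    exact h
  · haveI := hFD
    set T := Submodule.span (ZMod 2) (Set.range ![(1 : GaloisField 2 4), ζ ^ 2, ζ ^ 3 + ζ ^ 2 + 1]) with hT
    have t1 : (1 : GaloisField 2 4) ∈ T := Submodule.subset_span ⟨0, rfl⟩
    have t2 : ζ ^ 2 ∈ T := Submodule.subset_span ⟨1, rfl⟩
    have t3 : ζ ^ 3 + ζ ^ 2 + 1 ∈ T := Submodule.subset_span ⟨2, rfl⟩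
    have key : Submodule.span (ZMod 2) (Set.range
        ![(1 : GaloisField 2 4), ζ ^ 2, (ζ ^ 2)⁻¹ * 1, 1 * 1]) ≤ T := by
      refine Submodule.span_le.2 ?_
      rintro x ⟨i, rfl⟩
      fin_cases i
      · exact t1
      · exact t2
      · show (ζ ^ 2)⁻¹ * 1 ∈ T
        have e : (ζ ^ 2)⁻¹ * 1 = ζ ^ 3 + ζ ^ 2 + 1 := by
          rw [hinv, mul_one]
        rw [e]; exact t3
      · show 1 * 1 ∈ T
        rw [one_mul]; exact t1
    refine le_trans (Submodule.finrank_mono key) ?_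
    have h := finrank_range_le_card (R := ZMod 2) ![(1 : GaloisField 2 4), ζ ^ 2, ζ ^ 3 + ζ ^ 2 + 1]
    rw [Fintype.card_fin] at h
    exact h
  · haveI := hFD
    set T := Submodule.span (ZMod 2) (Set.range ![(1 : GaloisField 2 4), ζ ^ 2, ζ ^ 2]) with hT
    have t1 : (1 : GaloisField 2 4) ∈ T := Submodule.subset_span ⟨0, rfl⟩
    have t2 : ζ ^ 2 ∈ T := Submodule.subset_span ⟨1, rfl⟩
    have t3 : ζ ^ 2 ∈ T := Submodule.subset_span ⟨2, rfl⟩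
    have key : Submodule.span (ZMod 2) (Set.range
        ![(1 : GaloisField 2 4), ζ ^ 2, (ζ ^ 2)⁻¹ * ζ ^ 2, 1 * ζ ^ 2]) ≤ T := by
      refine Submodule.span_le.2 ?_
      rintro x ⟨i, rfl⟩
      fin_cases i
      · exact t1
      · exact t2
      · show (ζ ^ 2)⁻¹ * ζ ^ 2 ∈ T
        have e : (ζ ^ 2)⁻¹ * ζ ^ 2 = (1 : GaloisField 2 4) := by
          rw [hinv]; linear_combination hmul
        rw [e]; exact t1
      · show 1 * ζ ^ 2 ∈ T
        rw [one_mul]; exact t2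
    refine le_trans (Submodule.finrank_mono key) ?_
    have h := finrank_range_le_card (R := ZMod 2) ![(1 : GaloisField 2 4), ζ ^ 2, ζ ^ 2]
    rw [Fintype.card_fin] at h
    exact h
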